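/- arXiv:1602.03020 — 3 statements merged into one kernel-verified Lean document; each statement's English description precedes it below -/
import Mathlib

section
/- Let y₁ and y₂ be left-infinite words over a finite alphabet A and let Q ≥ 1 be an integer. If for every q ∈ ℕ there exists m ≥ q with g(tₘ y₁, tₘ y₂) ≤ Q, then y₁ and y₂ are confinal. -/
/- Left-infinite words over an alphabet `A` are functions `ℕ → A`;
`w n` is the letter at distance `n` from the right end. -/

variable {A : Type*}

/-- `app w z` appends the finite word `z` on the right of the left-infinite word `w`. -/
def app (w : ℕ → A) (z : List A) : ℕ → A :=
  fun n => if h : n < z.length then z.get ⟨z.length - 1 - n, by omega⟩ else w (n - z.length)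

/-- `suff m w` is the suffix of length `m` of `w`: the finite word `w (m-1) ⋯ w 1 w 0`. -/
def suff (m : ℕ) (w : ℕ → A) : List A :=
  List.ofFn (fun i : Fin m => w (m - 1 - i))

/-- Two left-infinite words are confinal if they share a common left-infinite prefix. -/
def Confinal (v₁ v₂ : ℕ → A) : Prop :=
  ∃ (y : ℕ → A) (z₁ z₂ : List A), v₁ = app y z₁ ∧ v₂ = app y z₂

/-- `negPow u hu` is the periodic left-infinite word `u⁻∞ = ⋯uuu`. -/
def negPow (u : List A) (hu : u ≠ []) : ℕ → A :=
  fun n => u.get ⟨u.length - 1 - n % u.length, by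
    have h : u.length ≠ 0 := fun h0 => hu (List.length_eq_zero_iff.mp h0)
    omega⟩

/-- A left-infinite word is periodic if it is `u⁻∞` for some nonempty finite word `u`. -/
def Periodic (w : ℕ → A) : Prop :=
  ∃ (u : List A) (hu : u ≠ []), w = negPow u hu

/-- The gap between two finite words `w₁, w₂`:
`g(w₁,w₂) = min {|u| : u ∈ A⁺, ∃ v ∈ A⁺, w₁u = vw₂ or w₂u = vw₁}`. -/
noncomputable def gap (w₁ w₂ : List A) : ℕ :=
  sInf {n : ℕ | ∃ u v : List A, u ≠ [] ∧ v ≠ [] ∧ u.length = n ∧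
    (w₁ ++ u = v ++ w₂ ∨ w₂ ++ u = v ++ w₁)}

/-- `listPow u n` is the `n`-fold concatenation `uⁿ`. -/
def listPow (u : List A) : ℕ → List A
  | 0 => []
  | n + 1 => u ++ listPow u n

/-- A nonempty finite word is primitive if it is not of the form `xⁿ` with `n ≥ 2`. -/
def Primitive (u : List A) : Prop :=
  u ≠ [] ∧ ∀ (x : List A) (n : ℕ), 2 ≤ n → u ≠ listPow x n

/-- `tk k w`: the longest suffix of `w` of length at most `k`. -/
def tk (k : ℕ) (w : List A) : List A := w.drop (w.length - k)

/-- `ik k w`: the longest prefix of `w` of length at most `k`. -/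
def ik (k : ℕ) (w : List A) : List A := w.take k

/-- The factor of `w = a₁⋯aₙ` of length `M` ending at the (1-indexed) position `m`:
`a_{m-M+1} ⋯ a_m`. -/
def factorAt (M : ℕ) (w : List A) (m : ℕ) : List A := (w.take m).drop (m - M)

/-- `m` is a bound of `w` w.r.t. the set `B ⊆ A^M` of borders. -/
def IsBound (B : Set (List A)) (M : ℕ) (w : List A) (m : ℕ) : Prop :=
  M ≤ m ∧ m ≤ w.length ∧ factorAt M w m ∈ B

/- The splitting point of `w`: its last bound if it has one, and `|w|` otherwise. -/
open Classical in
noncomputable def splitPoint (B : Set (List A)) (M : ℕ) (w : List A) : ℕ :=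
  if ∃ m, IsBound B M w m then sSup {m | IsBound B M w m} else w.length

/-- `Phik k w`: the sequence of all factors of `w` of length `k+1`, in the order
in which they occur in `w`. -/
def Phik (k : ℕ) (w : List A) : List (List A) :=
  List.ofFn (fun i : Fin (w.length - k) => (w.drop i).take (k + 1))

/-- A Lyndon word: a primitive word lexicographically minimal in its conjugacy class. -/
def IsLyndon [LinearOrder A] (u : List A) : Prop :=
  Primitive u ∧ ∀ w₁ w₂ : List A, u = w₁ ++ w₂ → u ≤ w₂ ++ w₁

/-- `A^{-∞}`: the disjoint union of the nonempty finite words and the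
left-infinite words over `A`. -/
def Ainf (A : Type*) := {l : List A // l ≠ []} ⊕ (ℕ → A)

/-- Multiplication on `A^{-∞}`: concatenation of finite words; appending a finite word
on the right of a left-infinite word; left-infinite words are right zeros. -/
def mulAinf : Ainf A → Ainf A → Ainf A
  | Sum.inl u, Sum.inl v => Sum.inl ⟨u.1 ++ v.1, fun h => u.2 (List.append_eq_nil_iff.mp h).1⟩
  | Sum.inl _, Sum.inr w => Sum.inr w
  | Sum.inr w, Sum.inl z => Sum.inr (app w z.1)
  | Sum.inr _, Sum.inr w => Sum.inr w

/-!
A gap `d ≤ Q` between the suffixes of length `m` of `y₁` and `y₂` means that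
`y₁ j = y₂ (j + d)` for all `j < m - d`, or the same with `y₁` and `y₂` exchanged.
Only finitely many pairs (shift, direction) are available, and agreement on a longer suffix
implies agreement on a shorter one, so a single pair works for all `m`. If `y₁` agrees
everywhere with the `d`-shift of `y₂`, then `y₂ = app y₁ (suff d y₂)`.
-/

open Filter in
theorem exists_forall_of_antitone {ι : Type*} [Finite ι] {P : ι → ℕ → Prop}
    (hP : ∀ i, Antitone (P i)) (h : ∀ n, ∃ i, P i n) : ∃ i, ∀ n, P i n := by
  by_contra! hne
  have hev : ∀ᶠ n in atTop, ∀ i, ¬P i n := by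
    refine eventually_all.2 fun i => ?_
    obtain ⟨n₀, hn₀⟩ := hne i
    exact eventually_atTop.2 ⟨n₀, fun n hn hPn => hn₀ (hP i hn hPn)⟩
  obtain ⟨n, hn⟩ := hev.exists
  obtain ⟨i, hi⟩ := h n
  exact hn i hi

@[simp]
theorem suff_length (m : ℕ) (w : ℕ → A) : (suff m w).length = m := by
  simp [suff]

@[simp]
theorem suff_getElem (m : ℕ) (w : ℕ → A) (i : ℕ) (hi : i < (suff m w).length) :
    (suff m w)[i] = w (m - 1 - i) := by
  simp [suff]

@[simp]
theorem app_nil (w : ℕ → A) : app w [] = w := by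
  funext n
  simp [app]

theorem app_shift_suff (d : ℕ) (w : ℕ → A) : app (fun n => w (n + d)) (suff d w) = w := by
  funext n
  by_cases hn : n < d
  · simp only [app, suff_length, hn, dite_true, List.get_eq_getElem, suff_getElem]
    congr 1
    omega
  · simp only [app, suff_length, hn, dite_false]
    congr 1
    omega

theorem Confinal.symm {v₁ v₂ : ℕ → A} (h : Confinal v₁ v₂) : Confinal v₂ v₁ := by
  obtain ⟨y, z₁, z₂, h₁, h₂⟩ := h
  exact ⟨y, z₂, z₁, h₂, h₁⟩

theorem confinal_of_shift {w₁ w₂ : ℕ → A} {d : ℕ} (hw : ∀ j, w₁ j = w₂ (j + d)) :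
    Confinal w₁ w₂ := by
  have hshift : (fun n => w₂ (n + d)) = w₁ := funext fun j => (hw j).symm
  exact ⟨w₁, [], suff d w₂, (app_nil w₁).symm, by rw [← hshift, app_shift_suff]⟩

def ShiftAgree (w₁ w₂ : ℕ → A) (d n : ℕ) : Prop :=
  ∀ j < n, w₁ j = w₂ (j + d)

theorem ShiftAgree.antitone (w₁ w₂ : ℕ → A) (d : ℕ) : Antitone (ShiftAgree w₁ w₂ d) :=
  fun _ _ hnk h j hj => h j (lt_of_lt_of_le hj hnk)

theorem shiftAgree_of_suff_append_eq {w₁ w₂ : ℕ → A} {m : ℕ} {u v : List A}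
    (e : suff m w₁ ++ u = v ++ suff m w₂) : ShiftAgree w₁ w₂ u.length (m - u.length) := by
  have hlen : v.length = u.length := by
    have := congrArg List.length e
    simp only [List.length_append, suff_length] at this
    omega
  intro j hj
  have hi : m - 1 - j < (suff m w₁ ++ u).length := by
    rw [List.length_append, suff_length]; omega
  have he := List.getElem_of_eq e hi
  rw [List.getElem_append_left (by rw [suff_length]; omega), List.getElem_append_right (by omega),
    suff_getElem, suff_getElem] at he
  convert he using 2 <;> omega

theorem gap_spec {w₁ w₂ : List A} (h₁ : w₁ ≠ []) (h₂ : w₂ ≠ []) :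
    ∃ u v : List A, u ≠ [] ∧ v ≠ [] ∧ u.length = gap w₁ w₂ ∧
      (w₁ ++ u = v ++ w₂ ∨ w₂ ++ u = v ++ w₁) :=
  Nat.sInf_mem (s := {n : ℕ | ∃ u v : List A, u ≠ [] ∧ v ≠ [] ∧ u.length = n ∧
    (w₁ ++ u = v ++ w₂ ∨ w₂ ++ u = v ++ w₁)}) ⟨_, w₂, w₁, h₂, h₁, rfl, Or.inl rfl⟩

theorem exists_shiftAgree_of_gap_le {w₁ w₂ : ℕ → A} {m Q : ℕ} (hm : 0 < m)
    (hg : gap (suff m w₁) (suff m w₂) ≤ Q) :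
    ∃ d ≤ Q, ShiftAgree w₁ w₂ d (m - Q) ∨ ShiftAgree w₂ w₁ d (m - Q) := by
  have hne : suff m w₁ ≠ [] ∧ suff m w₂ ≠ [] := by
    constructor <;> exact List.ne_nil_of_length_pos (by simpa using hm)
  obtain ⟨u, v, -, -, hu, e⟩ := gap_spec hne.1 hne.2
  have hdQ : u.length ≤ Q := hu.trans_le hg
  have hmono := fun w w' : ℕ → A => ShiftAgree.antitone w w' u.length (Nat.sub_le_sub_left hdQ m)
  refine ⟨u.length, hdQ, e.imp ?_ ?_⟩
  · exact fun e => hmono w₁ w₂ (shiftAgree_of_suff_append_eq e)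
  · exact fun e => hmono w₂ w₁ (shiftAgree_of_suff_append_eq e)

theorem stmt4_general (y₁ y₂ : ℕ → A) (Q : ℕ)
    (h : ∀ q : ℕ, ∃ m : ℕ, q ≤ m ∧ gap (suff m y₁) (suff m y₂) ≤ Q) :
    Confinal y₁ y₂ := by
  let P : Fin (Q + 1) ⊕ Fin (Q + 1) → ℕ → Prop :=
    Sum.elim (fun d => ShiftAgree y₁ y₂ d) (fun d => ShiftAgree y₂ y₁ d)
  have hP : ∀ i, Antitone (P i) := by
    rintro (d | d) <;> exact ShiftAgree.antitone _ _ _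
  have hex : ∀ n, ∃ i, P i n := by
    intro n
    obtain ⟨m, hm, hg⟩ := h (n + Q + 1)
    obtain ⟨d, hdQ, hd⟩ := exists_shiftAgree_of_gap_le (by omega) hg
    have hn : n ≤ m - Q := by omega
    rcases hd with hd | hd
    · exact ⟨.inl ⟨d, by omega⟩, ShiftAgree.antitone _ _ _ hn hd⟩
    · exact ⟨.inr ⟨d, by omega⟩, ShiftAgree.antitone _ _ _ hn hd⟩
  obtain ⟨d | d, hd⟩ := exists_forall_of_antitone hP hex
  · exact confinal_of_shift fun j => hd (j + 1) j j.lt_succ_self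
  · exact (confinal_of_shift fun j => hd (j + 1) j j.lt_succ_self).symm

/-- if `g(tₘ y₁, tₘ y₂) ≤ Q` for arbitrarily large `m`, then `y₁` and `y₂`
are confinal. -/
theorem stmt4 [Fintype A] (y₁ y₂ : ℕ → A) (Q : ℕ) (hQ : 1 ≤ Q)
    (h : ∀ q : ℕ, ∃ m : ℕ, q ≤ m ∧ gap (suff m y₁) (suff m y₂) ≤ Q) :
    Confinal y₁ y₂ :=
  stmt4_general y₁ y₂ Q h
end

section
/- Let A be a finite alphabet equipped with a linear order. Every ultimately periodic left-infinite word w over A can be written in exactly one way as w = u⁻∞ z, where u is a Lyndon word over A, z ∈ A*, and u is not a prefix of z. -/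
/- Left-infinite words over an alphabet `A` are functions `ℕ → A`;
`w n` is the letter at distance `n` from the right end. -/

variable {A : Type*}

/-! The eventual periods of `w` are closed under `p ↦ p % d`, so the least one, `d`, divides
all the others. If `w = u⁻∞ z` with `u` primitive, then `|u| = d` and `u` is the length-`d`
factor of `w` at position `|z|`; beyond the preperiod these factors are the conjugates of one
another. For existence take the lexicographically least of them, which is primitive by
minimality of `d`, and strip leading copies of `u` from `z`. For uniqueness, two conjugate Lyndon
words coincide; so if the two positions differ by `t`, then `t` is a period, and `t > 0` would
force `t ≥ d` and make `u` a prefix of the longer `z`. -/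

theorem listPow_length (x : List A) (k : ℕ) : (listPow x k).length = k * x.length := by
  induction k with
  | zero => simp [listPow]
  | succ k ih => simp [listPow, ih, Nat.succ_mul, Nat.add_comm]

theorem listPow_succ' (x : List A) (k : ℕ) : listPow x (k + 1) = listPow x k ++ x := by
  induction k with
  | zero => simp [listPow]
  | succ k ih =>
    show x ++ listPow x (k + 1) = listPow x (k + 1) ++ x
    conv_lhs => rw [ih, ← List.append_assoc]
    rfl

theorem add_sub_mod_modEq {m n : ℕ} (hmn : m ≤ n) (d : ℕ) : m + (n - m) % d ≡ n [MOD d] := by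
  have h := (Nat.mod_modEq (n - m) d).add_left m
  rwa [Nat.add_sub_cancel' hmn] at h

theorem dvd_sub_one_mul_add_self {d : ℕ} (hd : 0 < d) (k : ℕ) : d ∣ (d - 1) * k + k :=
  ⟨k, by rw [← Nat.succ_mul, Nat.succ_eq_add_one, Nat.sub_add_cancel hd]⟩

theorem app_of_lt (y : ℕ → A) (z : List A) {n : ℕ} (h : n < z.length) :
    app y z n = z[z.length - 1 - n] := dif_pos h

theorem app_of_le (y : ℕ → A) (z : List A) {n : ℕ} (h : z.length ≤ n) :
    app y z n = y (n - z.length) := dif_neg (by omega)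

theorem negPow_add_length (u : List A) (hu : u ≠ []) (n : ℕ) :
    negPow u hu (n + u.length) = negPow u hu n := by
  simp only [negPow, Nat.add_mod_right]

theorem negPow_of_lt (u : List A) (hu : u ≠ []) {n : ℕ} (hn : n < u.length) :
    negPow u hu n = u[u.length - 1 - n] := by
  simp only [negPow, Nat.mod_eq_of_lt hn, List.get_eq_getElem]

theorem suff_app (y : ℕ → A) (z : List A) : suff z.length (app y z) = z := by
  apply List.ext_getElem (by simp [suff])
  intro j _ hj
  simp only [suff, List.getElem_ofFn, app_of_lt y z (show z.length - 1 - j < z.length by omega)]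
  congr 1
  omega

theorem app_negPow_append_self (u : List A) (hu : u ≠ []) (t : List A) :
    app (negPow u hu) (u ++ t) = app (negPow u hu) t := by
  funext n
  have hu0 := List.length_pos_iff.mpr hu
  have hlen : (u ++ t).length = u.length + t.length := List.length_append
  rcases lt_or_ge n t.length with hn | hn
  · rw [app_of_lt _ _ (by omega), app_of_lt _ _ hn, List.getElem_append_right (by omega)]
    congr 1
    omega
  rcases lt_or_ge n (u.length + t.length) with hn' | hn'
  · rw [app_of_lt _ _ (by omega), app_of_le _ _ hn, List.getElem_append_left (by omega),
      negPow_of_lt _ _ (by omega)]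
    congr 1
    omega
  · rw [app_of_le _ _ (by omega), app_of_le _ _ hn,
      show n - t.length = n - (u ++ t).length + u.length by omega, negPow_add_length]

theorem exists_not_prefix_app_negPow_eq (u : List A) (hu : u ≠ []) (z : List A) :
    ∃ z', ¬ u <+: z' ∧ app (negPow u hu) z' = app (negPow u hu) z := by
  induction h : z.length using Nat.strong_induction_on generalizing z with
  | _ n ih =>
    by_cases hpre : u <+: z
    · obtain ⟨t, rfl⟩ := hpre
      obtain ⟨z', hz', heq⟩ := ih t.length
        (by simp [← h, List.length_pos_iff.mpr hu]) t rfl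
      exact ⟨z', hz', by rw [heq, app_negPow_append_self]⟩
    · exact ⟨z, hpre, rfl⟩

def PeriodicFrom (w : ℕ → A) (m p : ℕ) : Prop := ∀ n, m ≤ n → w (n + p) = w n

def eventualPeriods (w : ℕ → A) : Set ℕ := {p | 0 < p ∧ ∃ m, PeriodicFrom w m p}

/-- The factor `w (m + d - 1) ⋯ w (m + 1) w m` of length `d`. -/
def block (w : ℕ → A) (d m : ℕ) : List A := List.ofFn fun i : Fin d => w (m + d - 1 - i)

variable {w : ℕ → A} {m d : ℕ}

@[simp]
theorem length_block (w : ℕ → A) (d m : ℕ) : (block w d m).length = d := by simp [block]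

@[simp]
theorem getElem_block (w : ℕ → A) (d m : ℕ) {i : ℕ} (h : i < (block w d m).length) :
    (block w d m)[i] = w (m + d - 1 - i) := by simp [block]

theorem block_ne_nil (w : ℕ → A) (hd : 0 < d) (m : ℕ) : block w d m ≠ [] :=
  List.ne_nil_of_length_pos (by simpa using hd)

theorem block_add (w : ℕ → A) (a b m : ℕ) :
    block w (a + b) m = block w a (m + b) ++ block w b m := by
  simp only [block, List.ofFn_add]
  congr 2 <;> funext i <;> simp only [Fin.val_castLE, Fin.val_natAdd] <;> congr 1 <;> omega

theorem suff_eq_block (m : ℕ) (w : ℕ → A) : suff m w = block w m 0 := by simp [suff, block]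

theorem suff_add (w : ℕ → A) (a m : ℕ) : suff (a + m) w = block w a m ++ suff m w := by
  simp only [suff_eq_block, block_add, zero_add]

theorem periodicFrom_app_negPow (u : List A) (hu : u ≠ []) (z : List A) :
    PeriodicFrom (app (negPow u hu) z) z.length u.length := by
  intro n hn
  rw [app_of_le _ _ (by omega), app_of_le _ _ hn, Nat.sub_add_comm hn, negPow_add_length]

theorem block_app_negPow (u : List A) (hu : u ≠ []) (z : List A) :
    block (app (negPow u hu) z) u.length z.length = u := by
  apply List.ext_getElem (by simp)
  intro i hi _
  rw [getElem_block, app_of_le _ _ (by omega), negPow_of_lt _ _ (by omega)]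
  congr 1
  omega

namespace PeriodicFrom

theorem mono (h : PeriodicFrom w m d) {m' : ℕ} (hm : m ≤ m') : PeriodicFrom w m' d :=
  fun n hn => h n (hm.trans hn)

theorem apply_add_mul (h : PeriodicFrom w m d) {n : ℕ} (hn : m ≤ n) (k : ℕ) :
    w (n + d * k) = w n := by
  induction k with
  | zero => simp
  | succ k ih => rw [Nat.mul_succ, ← Nat.add_assoc, h _ (by omega), ih]

theorem apply_eq_of_modEq (h : PeriodicFrom w m d) {a b : ℕ} (ha : m ≤ a) (hb : m ≤ b)
    (hab : a ≡ b [MOD d]) : w a = w b := by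
  wlog hle : a ≤ b generalizing a b
  · exact (this hb ha hab.symm (by omega)).symm
  obtain ⟨k, hk⟩ := (Nat.modEq_iff_dvd' hle).mp hab
  rw [show b = a + d * k by omega, h.apply_add_mul ha]

theorem of_periodicFrom {m' p q : ℕ} (hq : PeriodicFrom w m' q) (hp : PeriodicFrom w m p)
    (hp0 : 0 < p) : PeriodicFrom w m q := by
  intro n hn
  have hshift : ∀ k ≥ m, w (k + p * m') = w k := fun k hk => hp.apply_add_mul hk m'
  have hm' : m' ≤ n + p * m' := le_add_left (Nat.le_mul_of_pos_left m' hp0)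
  rw [← hshift _ (by omega), Nat.add_right_comm, hq _ hm', hshift _ hn]

theorem mod {p : ℕ} (h : PeriodicFrom w m d) (hp : PeriodicFrom w m p) :
    PeriodicFrom w m (p % d) := by
  intro n hn
  rw [h.apply_eq_of_modEq (by omega) (by omega) ((Nat.mod_modEq p d).add_left n), hp n hn]

theorem block_eq_of_modEq (h : PeriodicFrom w m d) {a b : ℕ} (ha : m ≤ a) (hb : m ≤ b)
    (hab : a ≡ b [MOD d]) (L : ℕ) : block w L a = block w L b := by
  apply List.ext_getElem (by simp)
  intro i hi _
  simp only [length_block] at hi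
  rw [getElem_block, getElem_block, show a + L - 1 - i = a + (L - 1 - i) by omega,
    show b + L - 1 - i = b + (L - 1 - i) by omega]
  exact h.apply_eq_of_modEq (by omega) (by omega) (hab.add_right _)

theorem block_mul (h : PeriodicFrom w m d) (k : ℕ) :
    block w (k * d) m = listPow (block w d m) k := by
  induction k with
  | zero => simp [block, listPow]
  | succ k ih =>
    rw [Nat.succ_mul, Nat.add_comm, block_add, ih, listPow,
      h.block_eq_of_modEq (by omega) le_rfl (by simp [Nat.ModEq])]

theorem rotate_block (h : PeriodicFrom w m d) {r t : ℕ} (hrt : d ∣ r + t) :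
    (block w d m).rotate r = block w d (m + t) := by
  apply List.ext_getElem (by simp)
  intro i hi _
  simp only [List.length_rotate, length_block] at hi
  simp only [List.getElem_rotate, getElem_block, length_block]
  have hs := Nat.mod_lt (i + r) (show 0 < d by omega)
  refine h.apply_eq_of_modEq (by omega) (by omega) ?_
  obtain ⟨c, hc⟩ := hrt
  have hq := Nat.mod_add_div (i + r) d
  generalize (i + r) % d = s at hs hq
  have heq : m + d - 1 - s + d * c = m + t + d - 1 - i + d * ((i + r) / d) := by
    generalize d * c = C at hc
    generalize d * ((i + r) / d) = Q at hq
    omega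
  calc m + d - 1 - s ≡ m + d - 1 - s + d * c [MOD d] := (Nat.add_mul_mod_self_left _ _ _).symm
    _ = m + t + d - 1 - i + d * ((i + r) / d) := heq
    _ ≡ m + t + d - 1 - i [MOD d] := Nat.add_mul_mod_self_left _ _ _

theorem of_block_eq (h : PeriodicFrom w m d) (hd : 0 < d) {t : ℕ}
    (ht : block w d (m + t) = block w d m) : PeriodicFrom w m t := by
  intro n hn
  have hs := Nat.mod_lt (n - m) hd
  have hn' := add_sub_mod_modEq hn d
  have hblock := List.getElem_of_eq ht (show d - 1 - (n - m) % d < _ by rw [length_block]; omega)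
  rw [getElem_block, getElem_block,
    show m + t + d - 1 - (d - 1 - (n - m) % d) = m + (n - m) % d + t by omega,
    show m + d - 1 - (d - 1 - (n - m) % d) = m + (n - m) % d by omega] at hblock
  rw [← h.apply_eq_of_modEq (by omega) (by omega) (hn'.add_right t), hblock,
    h.apply_eq_of_modEq (by omega) hn hn']

theorem block_isPrefix_suff (h : PeriodicFrom w m d) {n : ℕ} (hn : m + d ≤ n) :
    block w d n <+: suff n w := by
  obtain ⟨k, rfl⟩ : ∃ k, n = d + k := ⟨n - d, by omega⟩
  rw [suff_add, h.block_eq_of_modEq (b := k) (by omega) (by omega) (by simp [Nat.ModEq])]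
  exact List.prefix_append _ _

theorem eq_app_negPow_block (h : PeriodicFrom w m d) (hb : block w d m ≠ []) :
    w = app (negPow (block w d m) hb) (suff m w) := by
  have hd : 0 < d := by simpa using List.length_pos_iff.mpr hb
  funext n
  rcases lt_or_ge n m with hn | hn
  · rw [app_of_lt _ _ (by simpa [suff] using hn)]
    simp only [suff, List.getElem_ofFn, List.length_ofFn]
    congr 1
    omega
  · have hr := Nat.mod_lt (n - m) hd
    rw [app_of_le _ _ (by simpa [suff] using hn)]
    simp only [negPow, List.get_eq_getElem, getElem_block, length_block, suff, List.length_ofFn]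
    refine h.apply_eq_of_modEq hn (by omega) ?_
    rw [show m + d - 1 - (d - 1 - (n - m) % d) = m + (n - m) % d by omega]
    exact (add_sub_mod_modEq hn d).symm

theorem primitive_block (h : PeriodicFrom w m d) (hd : 0 < d)
    (hmin : ∀ p ∈ eventualPeriods w, d ≤ p) : Primitive (block w d m) := by
  refine ⟨block_ne_nil w hd m, fun x k hk hpow => ?_⟩
  have hlen : d = k * x.length := by rw [← length_block w d m, hpow, listPow_length]
  have hxd : 2 * x.length ≤ d := hlen ▸ Nat.mul_le_mul_right _ hk
  have hx : 0 < x.length :=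
    Nat.pos_of_ne_zero fun h0 => by rw [h0, Nat.mul_zero] at hlen; omega
  obtain ⟨j, rfl⟩ : ∃ j, k = j + 1 := ⟨k - 1, by omega⟩
  have hrot : (block w d m).rotate x.length = block w d m := by
    rw [hpow]
    show (x ++ listPow x j).rotate x.length = _
    rw [List.rotate_append_length_eq, ← listPow_succ']
  have hshift : block w d (m + (d - x.length)) = block w d m := by
    rw [← h.rotate_block (r := x.length) ⟨1, by omega⟩, hrot]
  have := hmin _ ⟨by omega, m, h.of_block_eq hd hshift⟩
  omega

end PeriodicFrom

theorem sInf_eventualPeriods_dvd {p : ℕ} (hp : p ∈ eventualPeriods w) :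
    sInf (eventualPeriods w) ∣ p := by
  obtain ⟨hd, N, hN⟩ := Nat.sInf_mem ⟨p, hp⟩
  obtain ⟨-, N', hN'⟩ := hp
  by_contra hndvd
  have hmod : p % sInf (eventualPeriods w) ∈ eventualPeriods w :=
    ⟨Nat.pos_of_ne_zero (mt Nat.dvd_of_mod_eq_zero hndvd), max N N',
      (hN.mono (le_max_left N N')).mod (hN'.mono (le_max_right N N'))⟩
  exact absurd (Nat.sInf_le hmod) (not_le.mpr (Nat.mod_lt p hd))

theorem Primitive.length_eq_sInf_eventualPeriods {u z : List A} (hu : Primitive u)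
    (h : w = app (negPow u hu.1) z) : u.length = sInf (eventualPeriods w) := by
  subst h
  have hu0 := List.length_pos_iff.mpr hu.1
  have hper := periodicFrom_app_negPow u hu.1 z
  have hL : u.length ∈ eventualPeriods (app (negPow u hu.1) z) := ⟨hu0, _, hper⟩
  obtain ⟨-, N, hN⟩ := Nat.sInf_mem ⟨_, hL⟩
  obtain ⟨k, hk⟩ := sInf_eventualPeriods_dvd hL
  have hpow := (hN.of_periodicFrom hper hu0).block_mul k
  rw [Nat.mul_comm, ← hk, block_app_negPow] at hpow
  rcases k with _ | _ | k
  · rw [Nat.mul_zero] at hk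
    omega
  · rw [hk, Nat.mul_one]
  · exact absurd hpow (hu.2 _ _ (by omega))

theorem IsLyndon.le_rotate [LinearOrder A] {u : List A} (hu : IsLyndon u) (k : ℕ) :
    u ≤ u.rotate k := by
  rw [List.rotate_eq_drop_append_take_mod]
  exact hu.2 _ _ (List.take_append_drop _ _).symm

theorem IsLyndon.eq_of_isRotated [LinearOrder A] {u v : List A} (hu : IsLyndon u)
    (hv : IsLyndon v) (h : u ~r v) : u = v := by
  obtain ⟨k', hk'⟩ := h.symm
  obtain ⟨k, hk⟩ := h
  exact le_antisymm (hk ▸ hu.le_rotate k) (hk' ▸ hv.le_rotate k')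

theorem isLyndon_of_forall_le_rotate [LinearOrder A] {u : List A} (hu : Primitive u)
    (h : ∀ k, u ≤ u.rotate k) : IsLyndon u := by
  refine ⟨hu, fun w₁ w₂ hsplit => ?_⟩
  have hle := h w₁.length
  rwa [hsplit, List.rotate_append_length_eq, ← hsplit] at hle

theorem exists_isLyndon_not_prefix_eq_app_negPow [LinearOrder A]
    (hP : (eventualPeriods w).Nonempty) :
    ∃ (u : List A) (hu : u ≠ []) (z : List A),
      IsLyndon u ∧ ¬ u <+: z ∧ w = app (negPow u hu) z := by
  obtain ⟨hd, N, hN⟩ := Nat.sInf_mem hP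
  set d := sInf (eventualPeriods w)
  obtain ⟨t₀, -, hmin⟩ := (Finset.range d).exists_min_image (fun t => block w d (N + t))
    ⟨0, Finset.mem_range.mpr hd⟩
  have hle : ∀ n ≥ N, block w d (N + t₀) ≤ block w d n := fun n hn => by
    rw [← hN.block_eq_of_modEq (by omega) hn (add_sub_mod_modEq hn d)]
    exact hmin _ (Finset.mem_range.mpr (Nat.mod_lt _ hd))
  have hM : PeriodicFrom w (N + t₀) d := hN.mono (by omega)
  have hl : IsLyndon (block w d (N + t₀)) := by
    refine isLyndon_of_forall_le_rotate
      (hM.primitive_block hd fun p hp => Nat.sInf_le hp) fun k => ?_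
    rw [hM.rotate_block (Nat.add_comm ((d - 1) * k) k ▸ dvd_sub_one_mul_add_self hd k)]
    exact hle _ (by omega)
  have hb := block_ne_nil w hd (N + t₀)
  obtain ⟨z, hz, hzeq⟩ := exists_not_prefix_app_negPow_eq _ hb (suff (N + t₀) w)
  exact ⟨_, hb, z, hl, hz, hzeq ▸ hM.eq_app_negPow_block hb⟩

theorem eq_of_app_negPow_eq_app_negPow [LinearOrder A] {u₁ u₂ z₁ z₂ : List A}
    {hu₁ : u₁ ≠ []} {hu₂ : u₂ ≠ []} (hl₁ : IsLyndon u₁) (hl₂ : IsLyndon u₂)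
    (hp₁ : ¬ u₁ <+: z₁) (hp₂ : ¬ u₂ <+: z₂)
    (h : app (negPow u₁ hu₁) z₁ = app (negPow u₂ hu₂) z₂) : u₁ = u₂ ∧ z₁ = z₂ := by
  wlog hz : z₁.length ≤ z₂.length generalizing u₁ u₂ z₁ z₂
  · obtain ⟨hu, hz'⟩ := this hl₂ hl₁ hp₂ hp₁ h.symm (by omega)
    exact ⟨hu.symm, hz'.symm⟩
  set w := app (negPow u₁ hu₁) z₁
  set d := sInf (eventualPeriods w)
  have hd₁ : u₁.length = d := hl₁.1.length_eq_sInf_eventualPeriods rfl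
  have hd₂ : u₂.length = d := hl₂.1.length_eq_sInf_eventualPeriods h
  have hd0 : 0 < d := hd₁ ▸ List.length_pos_iff.mpr hu₁
  have hper : PeriodicFrom w z₁.length d := hd₁ ▸ periodicFrom_app_negPow u₁ hu₁ z₁
  have hb₁ : block w d z₁.length = u₁ := hd₁ ▸ block_app_negPow u₁ hu₁ z₁
  have hb₂ : block w d z₂.length = u₂ := by rw [h, ← hd₂, block_app_negPow]
  obtain ⟨t, ht⟩ : ∃ t, z₂.length = z₁.length + t := ⟨_, (Nat.add_sub_cancel' hz).symm⟩
  have hu : u₁ = u₂ := by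
    refine hl₁.eq_of_isRotated hl₂ ⟨(d - 1) * t, ?_⟩
    rw [← hb₁, ← hb₂, ht, hper.rotate_block (dvd_sub_one_mul_add_self hd0 t)]
  have ht0 : t = 0 := by
    by_contra ht0
    have hdt : d ≤ t := Nat.sInf_le
      ⟨Nat.pos_of_ne_zero ht0, _, hper.of_block_eq hd0 (by rw [← ht, hb₁, hb₂, hu])⟩
    have hpre := hper.block_isPrefix_suff (n := z₂.length) (by omega)
    rw [hb₂, h, suff_app] at hpre
    exact hp₂ hpre
  refine ⟨hu, ?_⟩
  rw [← suff_app (negPow u₁ hu₁) z₁, ← suff_app (negPow u₂ hu₂) z₂, ← h, ht, ht0, Nat.add_zero]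

theorem stmt12_general [LinearOrder A] (w : ℕ → A)
    (hw : ∃ (u : List A) (hu : u ≠ []) (v : List A), w = app (negPow u hu) v) :
    ∃! p : List A × List A, ∃ hp : p.1 ≠ [],
      IsLyndon p.1 ∧ ¬ p.1 <+: p.2 ∧ w = app (negPow p.1 hp) p.2 := by
  obtain ⟨u₀, hu₀, v₀, rfl⟩ := hw
  obtain ⟨u, hu, z, hl, hz, hrep⟩ := exists_isLyndon_not_prefix_eq_app_negPow
    ⟨u₀.length, List.length_pos_iff.mpr hu₀, _, periodicFrom_app_negPow u₀ hu₀ v₀⟩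
  refine ⟨(u, z), ⟨hu, hl, hz, hrep⟩, ?_⟩
  rintro ⟨u', z'⟩ ⟨_, hl', hz', hrep'⟩
  obtain ⟨rfl, rfl⟩ := eq_of_app_negPow_eq_app_negPow hl' hl hz' hz (hrep'.symm.trans hrep)
  rfl

/-- every ultimately periodic left-infinite word `w` can be written in
exactly one way as `w = u⁻∞ z` with `u` a Lyndon word and `u` not a prefix of `z`. -/
theorem stmt12 [Fintype A] [LinearOrder A] (w : ℕ → A)
    (hw : ∃ (u : List A) (hu : u ≠ []) (v : List A), w = app (negPow u hu) v) :
    ∃! p : List A × List A, ∃ hp : p.1 ≠ [],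
      IsLyndon p.1 ∧ ¬ p.1 <+: p.2 ∧ w = app (negPow p.1 hp) p.2 :=
  stmt12_general w hw
end

section
/- Let u be a primitive word over a finite alphabet A, let z₁, z₂ ∈ A* be finite words such that u is not a prefix of z₁ and u is not a prefix of z₂, and let a ∈ A be a letter. If u⁻∞ z₁ a = u⁻∞ z₂ (as left-infinite words), then either z₁a = z₂, or z₁a = u and z₂ is the empty word. -/
/- Left-infinite words over an alphabet `A` are functions `ℕ → A`;
`w n` is the letter at distance `n` from the right end. -/

variable {A : Type*}

/-!
Cancelling the shorter of the two appended words, `u⁻∞ z₁a = u⁻∞ z₂` says that one of `z₁a`, `z₂`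
is `y` followed by the other, where `u⁻∞ y = u⁻∞`. For primitive `u` this forces `y = uᵏ`: write
`y = r uᵠ` with `|r| < |u|`; then `u⁻∞ r = u⁻∞`, so `ur` and `ru` both give `u⁻∞` and hence
`ur = ru`, and commuting words are powers of a common word, which leaves only `r = ε`.
If `k = 0` the two words agree. Otherwise `u` is a prefix of `z₂`, which is excluded, or of `z₁a`;
as `u` is not a prefix of `z₁`, the latter means `z₁a = u` and `z₂ = ε`.
-/

theorem listPow_add (u : List A) (k m : ℕ) :
    listPow u (k + m) = listPow u k ++ listPow u m := by
  induction k with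
  | zero => simp [listPow]
  | succ k ih => rw [Nat.succ_add, listPow, listPow, ih, List.append_assoc]

theorem length_listPow (u : List A) (k : ℕ) : (listPow u k).length = k * u.length := by
  induction k with
  | zero => simp [listPow]
  | succ k ih => simp [listPow, ih, Nat.succ_mul, Nat.add_comm]

theorem exists_listPow_of_append_comm {x y : List A} (h : x ++ y = y ++ x) :
    ∃ z k m, x = listPow z k ∧ y = listPow z m := by
  induction hn : x.length + y.length using Nat.strong_induction_on generalizing x y with
  | _ n ih =>
  wlog hxy : x.length ≤ y.length generalizing x y
  · obtain ⟨z, k, m, hx, hy⟩ := this h.symm (by omega) (by omega)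
    exact ⟨z, m, k, hy, hx⟩
  rcases eq_or_ne x [] with rfl | hx
  · exact ⟨y, 0, 1, rfl, by simp [listPow]⟩
  obtain ⟨t, rfl⟩ : x <+: y :=
    List.prefix_of_prefix_length_le (h ▸ List.prefix_append _ _) (List.prefix_append _ _) hxy
  have : 0 < x.length := List.length_pos_iff.mpr hx
  obtain ⟨z, k, m, hx, ht⟩ :=
    ih (x.length + t.length) (by simp at hn; omega) (x := x) (y := t) (by simpa using h) rfl
  exact ⟨z, k, k + m, hx, by rw [listPow_add, ← hx, ← ht]⟩

theorem Primitive.eq_nil_of_append_comm {u y : List A} (hu : Primitive u)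
    (h : u ++ y = y ++ u) (hy : y.length < u.length) : y = [] := by
  obtain ⟨z, k, m, rfl, rfl⟩ := exists_listPow_of_append_comm h
  rw [length_listPow, length_listPow] at hy
  rcases Nat.eq_zero_or_pos m with rfl | hm
  · rfl
  · exact absurd rfl (hu.2 z k (by nlinarith))

theorem app_append (w : ℕ → A) (x y : List A) : app w (x ++ y) = app (app w x) y := by
  funext n
  simp only [app, List.length_append, List.get_eq_getElem, List.getElem_append]
  split_ifs <;> first | omega | (congr 1; omega)

theorem app_eq_app_of_length_eq {w w' : ℕ → A} {z z' : List A}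
    (hz : z.length = z'.length) (h : app w z = app w' z') : w = w' ∧ z = z' := by
  constructor
  · funext n
    simpa [app, hz] using congrFun h (n + z'.length)
  · refine List.ext_getElem hz fun i hi hi' => ?_
    simpa [app, hz, show z'.length - 1 - (z'.length - 1 - i) = i by omega,
      show z'.length - 1 - i < z'.length by omega] using congrFun h (z'.length - 1 - i)

theorem exists_eq_append_of_app_eq_app {w w' : ℕ → A} {z z' : List A}
    (hz : z.length ≤ z'.length) (h : app w z = app w' z') :
    ∃ y, z' = y ++ z ∧ w = app w' y := by
  set y := z'.take (z'.length - z.length)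
  have hsplit : z' = y ++ z'.drop (z'.length - z.length) := (List.take_append_drop _ _).symm
  rw [hsplit, app_append] at h
  obtain ⟨hw, hz'⟩ := app_eq_app_of_length_eq (by simp; omega) h
  exact ⟨y, hz' ▸ hsplit, hw⟩

theorem app_negPow_self (u : List A) (hu : u ≠ []) : app (negPow u hu) u = negPow u hu := by
  funext n
  unfold app negPow
  split_ifs with hn
  · simp [Nat.mod_eq_of_lt hn]
  · simp [Nat.mod_eq_sub_mod (not_lt.mp hn)]

theorem app_negPow_listPow (u : List A) (hu : u ≠ []) (k : ℕ) :
    app (negPow u hu) (listPow u k) = negPow u hu := by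
  induction k with
  | zero => funext n; simp [app, listPow]
  | succ k ih => rw [listPow, app_append, app_negPow_self, ih]

theorem Primitive.exists_listPow_of_negPow_eq_app {u : List A} (hu : Primitive u) {y : List A}
    (h : negPow u hu.1 = app (negPow u hu.1) y) : ∃ k, y = listPow u k := by
  set P := negPow u hu.1
  set q := y.length / u.length
  have hpos : 0 < u.length := List.length_pos_iff.mpr hu.1
  obtain ⟨r, hy, hr⟩ := exists_eq_append_of_app_eq_app (w := P) (z := listPow u q)
    (by rw [length_listPow]; exact Nat.div_mul_le_self _ _) ((app_negPow_listPow u hu.1 q).trans h)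
  have hr_len : r.length < u.length := by
    have hlen : r.length + q * u.length = y.length := by
      simpa [length_listPow] using (congrArg List.length hy).symm
    have hdiv : y.length % u.length + q * u.length = y.length := Nat.mod_add_div' _ _
    have := Nat.mod_lt y.length hpos
    omega
  have hcomm : u ++ r = r ++ u := by
    refine (app_eq_app_of_length_eq (w := P) (w' := P) (by simp [Nat.add_comm]) ?_).2
    rw [app_append, app_append, app_negPow_self, ← hr, app_negPow_self]
  exact ⟨q, by rw [hy, hu.eq_nil_of_append_comm hcomm hr_len, List.nil_append]⟩

theorem List.prefix_of_append_singleton_eq_append {u w z : List A} {a : A}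
    (h : z ++ [a] = u ++ w) (hw : w ≠ []) : u <+: z := by
  have := congrArg List.dropLast h
  rw [List.dropLast_concat, List.dropLast_append_of_ne_nil hw] at this
  exact this ▸ List.prefix_append _ _

theorem stmt14_general (u : List A) (hu : Primitive u)
    (z₁ z₂ : List A) (h₁ : ¬ u <+: z₁) (h₂ : ¬ u <+: z₂) (a : A)
    (h : app (negPow u hu.1) (z₁ ++ [a]) = app (negPow u hu.1) z₂) :
    z₁ ++ [a] = z₂ ∨ (z₁ ++ [a] = u ∧ z₂ = []) := by
  rcases le_total (z₁ ++ [a]).length z₂.length with hle | hle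
  · obtain ⟨y, rfl, hy⟩ := exists_eq_append_of_app_eq_app hle h
    obtain ⟨_ | k, rfl⟩ := hu.exists_listPow_of_negPow_eq_app hy
    · exact Or.inl rfl
    · exact absurd (by simp [listPow, List.append_assoc]) h₂
  · obtain ⟨y, hz, hy⟩ := exists_eq_append_of_app_eq_app hle h.symm
    obtain ⟨_ | k, rfl⟩ := hu.exists_listPow_of_negPow_eq_app hy
    · exact Or.inl (by simpa [listPow] using hz)
    · rw [listPow, List.append_assoc] at hz
      have hw : listPow u k ++ z₂ = [] := by
        by_contra hw
        exact h₁ (List.prefix_of_append_singleton_eq_append hz hw)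
      rw [hw, List.append_nil] at hz
      exact Or.inr ⟨hz, (List.append_eq_nil_iff.mp hw).2⟩

/-- if `u` is primitive, `u` is a prefix of neither `z₁` nor `z₂`, and
`u⁻∞ z₁ a = u⁻∞ z₂`, then `z₁a = z₂`, or `z₁a = u` and `z₂` is empty. -/
theorem stmt14 [Fintype A] (u : List A) (hu : Primitive u)
    (z₁ z₂ : List A) (h₁ : ¬ u <+: z₁) (h₂ : ¬ u <+: z₂) (a : A)
    (h : app (negPow u hu.1) (z₁ ++ [a]) = app (negPow u hu.1) z₂) :
    z₁ ++ [a] = z₂ ∨ (z₁ ++ [a] = u ∧ z₂ = []) :=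
  stmt14_general u hu z₁ z₂ h₁ h₂ a h
end
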